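/- For every x > 0 and every ordinal α < ε₀, the size of the Cantor normal form term denoting α is bounded by the slow-growing function: |α| ≤ G_α(x). -/

import Mathlib

/-! Induction along the fundamental sequences. A successor step `β + 1 ↦ β` shrinks the term
by exactly one symbol, matching `G_{β+1}(x) = 1 + G_β(x)`, and a limit step `λ ↦ λ(x)` with
`x ≥ 1` never shrinks it: the only place a symbol is lost is `ω^(β+1) ↦ ω^β·(x+1)`, and the
extra copy of `ω^β` pays for it. -/

open ONote Ordinal

/-- The slow-growing hierarchy `G_α`: `G_0(x) = 0`, `G_{α+1}(x) = 1 + G_α(x)`,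
`G_λ(x) = G_{λ(x)}(x)`. -/
def SlowG : ONote → ℕ → ℕ
  | o =>
    match fundamentalSequence o, fundamentalSequence_has_prop o with
    | Sum.inl none, _ => fun _ => 0
    | Sum.inl (some a), hp =>
      have : a < o := by rw [lt_def, hp.1]; exact Order.lt_succ _
      fun x => 1 + SlowG a x
    | Sum.inr f, hp => fun x =>
      have : f x < o := (hp.2.1 x).2.1
      SlowG (f x) x
  termination_by o => o

/-- The size `|α|` of the term denoting `α`: `|0| = 0`, `|ω^α| = 1 + |α|`,
`|α + α'| = |α| + |α'|`. -/
def osize : ONote → ℕ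
  | ONote.zero => 0
  | ONote.oadd e n a => (n : ℕ) * (1 + osize e) + osize a

namespace ONote

theorem fundamentalSequence_eq_inl_none_iff {o : ONote} :
    fundamentalSequence o = Sum.inl none ↔ o = 0 :=
  ⟨fun h => (fundamentalSequenceProp_inl_none o).1 (h ▸ fundamentalSequence_has_prop o),
    by rintro rfl; rfl⟩

theorem lt_of_fundamentalSequence_eq_inl_some {o a : ONote}
    (h : fundamentalSequence o = Sum.inl (some a)) : a < o := by
  rw [lt_def, ((fundamentalSequenceProp_inl_some o a).1 (h ▸ fundamentalSequence_has_prop o)).1]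
  exact Order.lt_succ _

theorem lt_of_fundamentalSequence_eq_inr {o : ONote} {f : ℕ → ONote}
    (h : fundamentalSequence o = Sum.inr f) (i : ℕ) : f i < o :=
  (((fundamentalSequenceProp_inr o f).1 (h ▸ fundamentalSequence_has_prop o)).2.1 i).2.1

theorem slowG_def {o : ONote} {s} (h : fundamentalSequence o = s) :
    SlowG o =
      match
        (motive := (s : Option ONote ⊕ (ℕ → ONote)) → FundamentalSequenceProp o s → ℕ → ℕ)
        s, h ▸ fundamentalSequence_has_prop o with
      | Sum.inl none, _ => fun _ => 0
      | Sum.inl (some a), _ => fun x => 1 + SlowG a x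
      | Sum.inr f, _ => fun x => SlowG (f x) x := by
  subst h
  rw [SlowG]

theorem slowG_succ {o a : ONote} (h : fundamentalSequence o = Sum.inl (some a)) (x : ℕ) :
    SlowG o x = 1 + SlowG a x := by
  rw [slowG_def h]

theorem slowG_limit {o : ONote} {f : ℕ → ONote} (h : fundamentalSequence o = Sum.inr f)
    (x : ℕ) : SlowG o x = SlowG (f x) x := by
  rw [slowG_def h]

theorem osize_eq_of_fundamentalSequence_eq_inl_some {o a : ONote}
    (h : fundamentalSequence o = Sum.inl (some a)) : osize o = osize a + 1 := by
  induction o generalizing a with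
  | zero => cases h
  | oadd e n b _ ihb =>
    rw [fundamentalSequence] at h
    rcases hb : b.fundamentalSequence with (_ | b') | fb <;> rw [hb] at h
    · obtain rfl := fundamentalSequence_eq_inl_none_iff.1 hb
      obtain ⟨k, rfl⟩ : ∃ k, n = k.succPNat := ⟨n.natPred, n.succPNat_natPred.symm⟩
      rcases he : e.fundamentalSequence with (_ | e') | fe <;> rw [he] at h <;>
        rcases k with _ | k <;>
        simp only [Nat.natPred_succPNat, reduceCtorEq, Sum.inl.injEq, Option.some.injEq] at h
      all_goals
        obtain rfl := fundamentalSequence_eq_inl_none_iff.1 he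
        subst h
        simp [osize]
    · cases h
      simp only [osize, ihb hb]
      omega
    · cases h

/-- For `i = 0` this fails: `ω^(e+1)` has fundamental sequence starting at `ω^e`. -/
theorem osize_le_osize_of_fundamentalSequence_eq_inr {o : ONote} {f : ℕ → ONote}
    (h : fundamentalSequence o = Sum.inr f) {i : ℕ} (hi : 0 < i) : osize o ≤ osize (f i) := by
  induction o generalizing f with
  | zero => cases h
  | oadd e n b ihe ihb =>
    rw [fundamentalSequence] at h
    rcases hb : b.fundamentalSequence with (_ | b') | fb <;> rw [hb] at h
    · obtain rfl := fundamentalSequence_eq_inl_none_iff.1 hb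
      obtain ⟨k, rfl⟩ : ∃ k, n = k.succPNat := ⟨n.natPred, n.succPNat_natPred.symm⟩
      rcases he : e.fundamentalSequence with (_ | e') | fe <;> rw [he] at h <;>
        rcases k with _ | k <;> simp only [Nat.natPred_succPNat, reduceCtorEq, Sum.inr.injEq] at h
      all_goals
        subst h
        simp only [osize, Nat.succPNat_coe, PNat.one_coe, add_zero]
      · rw [osize_eq_of_fundamentalSequence_eq_inl_some he]
        nlinarith
      · rw [osize_eq_of_fundamentalSequence_eq_inl_some he]
        nlinarith
      · linarith [ihe he]
      · nlinarith [ihe he]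
    · cases h
    · cases h
      simpa only [osize, add_le_add_iff_left] using ihb hb

end ONote

/-- For every `x > 0` and every ordinal `α < ε₀`, the size of the Cantor normal form term
denoting `α` is bounded by the slow-growing function: `|α| ≤ G_α(x)`. -/
theorem osize_le_slowGrowing (x : ℕ) (hx : 0 < x) (α : ONote) :
    osize α ≤ SlowG α x := by
  rcases h : fundamentalSequence α with (_ | a) | f
  · obtain rfl := fundamentalSequence_eq_inl_none_iff.1 h
    exact Nat.zero_le _
  · have := lt_of_fundamentalSequence_eq_inl_some h
    rw [slowG_succ h, osize_eq_of_fundamentalSequence_eq_inl_some h, add_comm]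
    exact Nat.add_le_add_left (osize_le_slowGrowing x hx a) 1
  · have := lt_of_fundamentalSequence_eq_inr h x
    rw [slowG_limit h]
    exact (osize_le_osize_of_fundamentalSequence_eq_inr h hx).trans
      (osize_le_slowGrowing x hx (f x))
termination_by α
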